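/- arXiv:2212.11373 — 5 statements merged into one kernel-verified Lean document; each statement's English description precedes it below -/
import Mathlib

section
/- Let E be the elliptic curve y² = x³ + x² + 16x + 180 over ℚ. The points (−2,12), (4,−18) and (22,−108) lie on E; one has [2](−2,12) = (4,−18) = [2](22,−108) and [2](4,−18) = (−5,0); the point (−2,12) has order 8 in E(ℚ); and the subgroup of E(ℚ) generated by {(−2,12), (4,−18), (22,−108)} is cyclic of order 8. -/
/-! Doubling `(-2,12)` twice reaches the 2-torsion point `(-5,0)`, so `(-2,12)` has order 8.
Since `(4,-18)` is its double and `(-2,12) + (4,-18) = -(22,-108)`, the three points all lie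
in the cyclic group generated by `(-2,12)`, which therefore is their closure. -/

open WeierstrassCurve WeierstrassCurve.Affine

/-- The elliptic curve `y² = x³ + x² + 16x + 180` over `ℚ`. -/
def W3 : WeierstrassCurve.Affine ℚ := ⟨0, 1, 0, 16, 180⟩

namespace WeierstrassCurve.Affine.Point

variable {F : Type*} [Field F] [DecidableEq F] {W : Affine F}

lemma some_add_some_of_X_ne {x₁ y₁ x₂ y₂ x₃ y₃ : F} (h₁ : W.Nonsingular x₁ y₁)
    (h₂ : W.Nonsingular x₂ y₂) (h₃ : W.Nonsingular x₃ y₃) (hx : x₁ ≠ x₂)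
    (hx₃ : W.addX x₁ x₂ (W.slope x₁ x₂ y₁ y₂) = x₃)
    (hy₃ : W.addY x₁ x₂ y₁ (W.slope x₁ x₂ y₁ y₂) = y₃) :
    some _ _ h₁ + some _ _ h₂ = some _ _ h₃ := by
  rw [add_of_X_ne hx, some.injEq]
  exact ⟨hx₃, hy₃⟩

lemma two_nsmul_some_of_Y_ne {x y x' y' : F} (h : W.Nonsingular x y) (h' : W.Nonsingular x' y')
    (hy : y ≠ W.negY x y) (hx' : W.addX x x (W.slope x x y y) = x')
    (hy' : W.addY x x y (W.slope x x y y) = y') :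
    2 • some _ _ h = some _ _ h' := by
  rw [two_nsmul, add_self_of_Y_ne hy, some.injEq]
  exact ⟨hx', hy'⟩

end WeierstrassCurve.Affine.Point

lemma addOrderOf_eq_eight_of_two_nsmul {G : Type*} [AddMonoid G] {P Q R : G} (hPQ : 2 • P = Q)
    (hQR : 2 • Q = R) (hR : R ≠ 0) (hR2 : 2 • R = 0) : addOrderOf P = 8 := by
  have h4 : 4 • P = R := by rw [show 4 = 2 * 2 from rfl, mul_nsmul', hPQ, hQR]
  have h8 : 8 • P = 0 := by rw [show 8 = 2 * 4 from rfl, mul_nsmul', h4, hR2]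
  exact addOrderOf_eq_prime_pow (p := 2) (n := 2) (h4 ▸ hR) h8

lemma AddSubgroup.closure_eq_zmultiples_of_mem {G : Type*} [AddGroup G] {s : Set G} {g : G}
    (hg : g ∈ s) (hs : s ⊆ AddSubgroup.zmultiples g) :
    AddSubgroup.closure s = AddSubgroup.zmultiples g :=
  le_antisymm (AddSubgroup.closure_le _ |>.2 hs)
    (AddSubgroup.zmultiples_le.2 (AddSubgroup.subset_closure hg))

lemma AddSubgroup.nonempty_zmultiples_addEquiv_zmod {G : Type*} [AddGroup G] (g : G) :
    Nonempty (AddSubgroup.zmultiples g ≃+ ZMod (addOrderOf g)) :=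
  ⟨Nat.card_zmultiples g ▸ (zmodAddCyclicAddEquiv inferInstance).symm⟩

lemma W3_Δ : W3.Δ = -2 ^ 11 * 3 ^ 8 := by
  norm_num [W3, WeierstrassCurve.Δ, WeierstrassCurve.b₂, WeierstrassCurve.b₄,
    WeierstrassCurve.b₆, WeierstrassCurve.b₈]

lemma W3_nonsingular {x y : ℚ} (h : y ^ 2 = x ^ 3 + x ^ 2 + 16 * x + 180) :
    W3.Nonsingular x y :=
  (equation_iff_nonsingular_of_Δ_ne_zero (by rw [W3_Δ]; norm_num)).1
    (by rw [equation_iff]; simp [W3, h])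

/-- On `y² = x³ + x² + 16x + 180` over `ℚ`: the points `(-2,12)`, `(4,-18)`, `(22,-108)` lie
on the curve; `[2](-2,12) = (4,-18) = [2](22,-108)`, `[2](4,-18) = (-5,0)`; `(-2,12)` has
order 8; and the subgroup generated by the three points is cyclic of order 8. -/
theorem quasi_critical_points_of_4T5 :
    W3.Δ ≠ 0 ∧
    ∃ (h1 : W3.Nonsingular (-2) 12) (h2 : W3.Nonsingular 4 (-18))
      (h3 : W3.Nonsingular 22 (-108)) (h4 : W3.Nonsingular (-5) 0),
      2 • Point.some _ _ h1 = Point.some _ _ h2 ∧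
      2 • Point.some _ _ h3 = Point.some _ _ h2 ∧
      2 • Point.some _ _ h2 = Point.some _ _ h4 ∧
      addOrderOf (Point.some _ _ h1) = 8 ∧
      Nonempty ((AddSubgroup.closure {Point.some _ _ h1, Point.some _ _ h2, Point.some _ _ h3} :
        AddSubgroup W3.Point) ≃+ ZMod 8) := by
  have hΔ : W3.Δ ≠ 0 := by rw [W3_Δ]; norm_num
  have h1 := W3_nonsingular (x := -2) (y := 12) (by norm_num)
  have h2 := W3_nonsingular (x := 4) (y := -18) (by norm_num)
  have h3 := W3_nonsingular (x := 22) (y := -108) (by norm_num)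
  have h4 := W3_nonsingular (x := -5) (y := 0) (by norm_num)
  have e1 : 2 • Point.some _ _ h1 = Point.some _ _ h2 := by
    apply Point.two_nsmul_some_of_Y_ne <;> norm_num [W3, negY, addX, addY, negAddY, Affine.slope]
  have e3 : 2 • Point.some _ _ h3 = Point.some _ _ h2 := by
    apply Point.two_nsmul_some_of_Y_ne <;> norm_num [W3, negY, addX, addY, negAddY, Affine.slope]
  have e2 : 2 • Point.some _ _ h2 = Point.some _ _ h4 := by
    apply Point.two_nsmul_some_of_Y_ne <;> norm_num [W3, negY, addX, addY, negAddY, Affine.slope]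
  have e4 : 2 • Point.some _ _ h4 = 0 := by
    rw [two_nsmul, Point.add_self_of_Y_eq (by norm_num [W3, negY])]
  have hord := addOrderOf_eq_eight_of_two_nsmul e1 e2 (Point.some_ne_zero h4) e4
  have hsum : Point.some _ _ h1 + Point.some _ _ h2 = -Point.some _ _ h3 := by
    apply Point.some_add_some_of_X_ne <;> norm_num [W3, negY, addX, addY, negAddY, Affine.slope]
  have hP3 : Point.some _ _ h3 = (-3 : ℤ) • Point.some _ _ h1 := by
    rw [← e1] at hsum
    rw [← neg_neg (Point.some _ _ h3), ← hsum]
    module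
  refine ⟨hΔ, h1, h2, h3, h4, e1, e3, e2, hord, ?_⟩
  rw [AddSubgroup.closure_eq_zmultiples_of_mem (Set.mem_insert _ _), ← hord]
  · exact AddSubgroup.nonempty_zmultiples_addEquiv_zmod _
  · rintro _ (rfl | rfl | rfl)
    · exact AddSubgroup.mem_zmultiples _
    · exact e1 ▸ AddSubgroup.nsmul_mem_zmultiples _ 2
    · exact hP3 ▸ AddSubgroup.zsmul_mem_zmultiples _ _
end

section
/- Let E be the elliptic curve y² + xy = x³ − 28x + 272 over ℚ. The points (2,−16) and (−4,20) lie on E, [2](2,−16) = (−4,20), and the point (2,−16) has order 10 in E(ℚ). -/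
/-!
With `P = (2,-16)` the chord–tangent formulas give `2P = (-4,20)`, `4P = (8,-28)` and
`5P = (-8,4)`. The last point satisfies `2y + x = 0`, so its tangent is vertical and `10P = O`;
since `2P` and `5P` are affine points, the order of `P` divides `10` but neither `2` nor `5`.
-/

open WeierstrassCurve WeierstrassCurve.Affine

/-- The elliptic curve `y² + xy = x³ - 28x + 272` over `ℚ`. -/
def W4 : WeierstrassCurve.Affine ℚ := ⟨1, 0, 0, -28, 272⟩

theorem addOrderOf_eq_mul_of_prime {G : Type*} [AddMonoid G] {a : G} {p q : ℕ}
    (hp : p.Prime) (hq : q.Prime) (h : (p * q) • a = 0) (hpa : p • a ≠ 0)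
    (hqa : q • a ≠ 0) :
    addOrderOf a = p * q := by
  refine addOrderOf_eq_of_nsmul_and_div_prime_nsmul (Nat.mul_pos hp.pos hq.pos) h ?_
  intro r hr hrpq
  rcases (Nat.Prime.dvd_mul hr).mp hrpq with hrp | hrq
  · rwa [(Nat.prime_dvd_prime_iff_eq hr hp).mp hrp, Nat.mul_div_cancel_left _ hp.pos]
  · rwa [(Nat.prime_dvd_prime_iff_eq hr hq).mp hrq, Nat.mul_div_cancel _ hq.pos]

namespace WeierstrassCurve.Affine.Point

variable {F : Type*} [Field F] [DecidableEq F] {W : Affine F}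

theorem some_add_some {x₁ y₁ x₂ y₂ x₃ y₃ : F} {h₁ : W.Nonsingular x₁ y₁}
    {h₂ : W.Nonsingular x₂ y₂} {h₃ : W.Nonsingular x₃ y₃}
    (hxy : ¬(x₁ = x₂ ∧ y₁ = W.negY x₂ y₂))
    (hx : W.addX x₁ x₂ (W.slope x₁ x₂ y₁ y₂) = x₃)
    (hy : W.addY x₁ x₂ y₁ (W.slope x₁ x₂ y₁ y₂) = y₃) :
    some _ _ h₁ + some _ _ h₂ = some _ _ h₃ := by
  rw [add_some hxy]
  subst hx hy
  rfl

end WeierstrassCurve.Affine.Point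

theorem W4_Δ_ne_zero : W4.Δ ≠ 0 := by
  norm_num [W4, WeierstrassCurve.Δ, b₂, b₄, b₆, b₈]

theorem W4_nonsingular {x y : ℚ} (h : y ^ 2 + x * y = x ^ 3 - 28 * x + 272) :
    W4.Nonsingular x y :=
  (equation_iff_nonsingular_of_Δ_ne_zero W4_Δ_ne_zero).mp <| by
    rw [equation_iff]
    simp only [W4]
    linear_combination h

/-- On `y² + xy = x³ - 28x + 272` over `ℚ`: the points `(2,-16)` and `(-4,20)` lie on the
curve, `[2](2,-16) = (-4,20)`, and `(2,-16)` has order 10. -/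
theorem quasi_critical_points_of_5T4 :
    W4.Δ ≠ 0 ∧
    ∃ (h1 : W4.Nonsingular 2 (-16)) (h2 : W4.Nonsingular (-4) 20),
      2 • Point.some _ _ h1 = Point.some _ _ h2 ∧
      addOrderOf (Point.some _ _ h1) = 10 := by
  have hP : W4.Nonsingular 2 (-16) := W4_nonsingular (by norm_num)
  have h2P : W4.Nonsingular (-4) 20 := W4_nonsingular (by norm_num)
  have h4P : W4.Nonsingular 8 (-28) := W4_nonsingular (by norm_num)
  have h5P : W4.Nonsingular (-8) 4 := W4_nonsingular (by norm_num)
  set P := Point.some _ _ hP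
  have double_P : 2 • P = Point.some _ _ h2P := by
    rw [two_nsmul]
    refine Point.some_add_some ?_ ?_ ?_ <;> norm_num [W4, Affine.slope, negY, addX, addY, negAddY]
  have four_P : 4 • P = Point.some _ _ h4P := by
    rw [show 4 = 2 * 2 from rfl, mul_nsmul, double_P, two_nsmul]
    refine Point.some_add_some ?_ ?_ ?_ <;> norm_num [W4, Affine.slope, negY, addX, addY, negAddY]
  have five_P : 5 • P = Point.some _ _ h5P := by
    rw [succ_nsmul, four_P]
    refine Point.some_add_some ?_ ?_ ?_ <;> norm_num [W4, Affine.slope, negY, addX, addY, negAddY]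
  have ten_P : (2 * 5) • P = 0 := by
    rw [mul_nsmul', five_P, two_nsmul]
    exact Point.add_self_of_Y_eq (by norm_num [W4, negY])
  refine ⟨W4_Δ_ne_zero, hP, h2P, double_P, ?_⟩
  exact addOrderOf_eq_mul_of_prime Nat.prime_two Nat.prime_five ten_P
    (double_P ▸ Point.some_ne_zero h2P) (five_P ▸ Point.some_ne_zero h5P)
end

section
/- Let E be the elliptic curve y² = x³ + 6x − 7 over ℚ. The points (4,9) and (1,0) lie on E, [2](4,9) = (1,0), the point (1,0) has order 2, and the point (4,9) has order 4 in E(ℚ). -/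
open WeierstrassCurve WeierstrassCurve.Affine

/-! The point `(1, 0)` is its own negative, hence 2-torsion. The tangent at `(4, 9)` has slope
`(3·4² + 6) / (2·9) = 3`, and the line `y = 3x - 3` meets the curve again at `(1, 0)`, the third
root of `x³ - 9x² + 24x - 16 = (x - 4)²(x - 1)`; so `[2](4, 9) = (1, 0)`, and an element whose
double has order 2 has order 4. -/

/-- The elliptic curve `y² = x³ + 6x - 7` over `ℚ`. -/
def W5 : WeierstrassCurve.Affine ℚ := ⟨0, 0, 0, 6, -7⟩

theorem addOrderOf_eq_four_of_two_nsmul {G : Type*} [AddMonoid G] {P Q : G}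
    (hPQ : 2 • P = Q) (hQ : addOrderOf Q = 2) : addOrderOf P = 4 := by
  have hQ_ne_zero : Q ≠ 0 := by
    rintro rfl
    simp at hQ
  refine addOrderOf_eq_prime_pow (p := 2) (n := 1) ?_ ?_
  · simpa [hPQ] using hQ_ne_zero
  · rw [pow_succ, mul_nsmul, pow_one, hPQ]
    exact hQ ▸ addOrderOf_nsmul_eq_zero Q

namespace WeierstrassCurve.Affine.Point

variable {F : Type*} [Field F] [DecidableEq F] {W : WeierstrassCurve.Affine F}

theorem addOrderOf_some_of_Y_eq {x y : F} {h : W.Nonsingular x y} (hy : y = W.negY x y) :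
    addOrderOf (some _ _ h) = 2 :=
  addOrderOf_eq_prime (by rw [two_nsmul]; exact add_self_of_Y_eq hy) (some_ne_zero h)

theorem two_nsmul_some_of_Y_ne_s5 {x₁ y₁ x₂ y₂ : F} {h₁ : W.Nonsingular x₁ y₁}
    (h₂ : W.Nonsingular x₂ y₂) (hy : y₁ ≠ W.negY x₁ y₁)
    (hx₂ : W.addX x₁ x₁ (W.slope x₁ x₁ y₁ y₁) = x₂)
    (hy₂ : W.addY x₁ x₁ y₁ (W.slope x₁ x₁ y₁ y₁) = y₂) :
    2 • some _ _ h₁ = some _ _ h₂ := by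
  subst hx₂ hy₂
  rw [two_nsmul]
  exact add_self_of_Y_ne hy

end WeierstrassCurve.Affine.Point

theorem W5_Δ : W5.Δ = -34992 := by
  norm_num [W5, WeierstrassCurve.Δ, WeierstrassCurve.b₂, WeierstrassCurve.b₄,
    WeierstrassCurve.b₆, WeierstrassCurve.b₈]

theorem W5_nonsingular_iff (x y : ℚ) : W5.Nonsingular x y ↔ y ^ 2 = x ^ 3 + 6 * x - 7 := by
  rw [← equation_iff_nonsingular_of_Δ_ne_zero (by rw [W5_Δ]; norm_num), equation_iff]
  simp only [W5]
  ring_nf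

theorem W5_slope_four_nine : W5.slope 4 4 9 9 = 3 := by
  rw [slope_of_Y_ne rfl (by norm_num [W5])]
  norm_num [W5]

/-- On `y² = x³ + 6x - 7` over `ℚ`: the points `(4,9)` and `(1,0)` lie on the curve,
`[2](4,9) = (1,0)`, `(1,0)` has order 2, and `(4,9)` has order 4. -/
theorem quasi_critical_points_of_6T6 :
    W5.Δ ≠ 0 ∧
    ∃ (h1 : W5.Nonsingular 4 9) (h2 : W5.Nonsingular 1 0),
      2 • Point.some _ _ h1 = Point.some _ _ h2 ∧
      addOrderOf (Point.some _ _ h2) = 2 ∧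
      addOrderOf (Point.some _ _ h1) = 4 := by
  have h1 : W5.Nonsingular 4 9 := (W5_nonsingular_iff 4 9).mpr (by norm_num)
  have h2 : W5.Nonsingular 1 0 := (W5_nonsingular_iff 1 0).mpr (by norm_num)
  have hdouble : 2 • Point.some _ _ h1 = Point.some _ _ h2 :=
    Point.two_nsmul_some_of_Y_ne_s5 h2 (by norm_num [W5])
      (by norm_num [addX, W5_slope_four_nine, W5])
      (by norm_num [addY, negAddY, addX, W5_slope_four_nine, W5])
  have hord2 : addOrderOf (Point.some _ _ h2) = 2 :=
    Point.addOrderOf_some_of_Y_eq (by norm_num [W5])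
  exact ⟨by rw [W5_Δ]; norm_num, h1, h2, hdouble, hord2,
    addOrderOf_eq_four_of_two_nsmul hdouble hord2⟩
end

section
/- For all x, y ∈ ℚ with y² = x³ − 15x + 22 and x ≠ 2, setting u = (x² − 2x − 3)/(4(x − 2)) and v = (x² − 4x + 7)·y/(8(x − 2)²), one has v² = u³ + 1. In other words, the map ψ(x,y) = ((x²−2x−3)/(4(x−2)), (x²−4x+7)y/(8(x−2)²)) sends affine points of the elliptic curve y² = x³ − 15x + 22 (with x ≠ 2) to affine points of the elliptic curve y² = x³ + 1. -/
/-! The curve `y² = x³ - 15x + 22` is `y² = (x - 2)(x² + 2x - 11)`, and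
`(x² - 4x + 7)²(x² + 2x - 11) = (x² - 2x - 3)³ + 64(x - 2)³`. Multiplying the latter by
`(x - 2)` and dividing by `64(x - 2)⁴` turns `v²` into `u³ + 1`. -/

theorem cubic_eq_sub_two_mul {R : Type*} [CommRing R] (x : R) :
    x ^ 3 - 15 * x + 22 = (x - 2) * (x ^ 2 + 2 * x - 11) := by
  ring

theorem isogeny_numerator_identity {R : Type*} [CommRing R] (x : R) :
    (x ^ 2 - 4 * x + 7) ^ 2 * (x ^ 2 + 2 * x - 11) = (x ^ 2 - 2 * x - 3) ^ 3 + 64 * (x - 2) ^ 3 := by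
  ring

theorem isogeny_formula_maps_curve_to_curve_of_two_ne_zero {K : Type*} [Field K]
    (h2 : (2 : K) ≠ 0) {x y : K} (hxy : y ^ 2 = x ^ 3 - 15 * x + 22) (hx : x ≠ 2) :
    ((x ^ 2 - 4 * x + 7) * y / (8 * (x - 2) ^ 2)) ^ 2 =
      ((x ^ 2 - 2 * x - 3) / (4 * (x - 2))) ^ 3 + 1 := by
  have hx2 : x - 2 ≠ 0 := sub_ne_zero.mpr hx
  have h4 : (4 : K) ≠ 0 := by
    rw [show (4 : K) = 2 ^ 2 by norm_num]
    exact pow_ne_zero 2 h2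
  have h8 : (8 : K) ≠ 0 := by
    rw [show (8 : K) = 2 ^ 3 by norm_num]
    exact pow_ne_zero 3 h2
  have h64 : (64 : K) ≠ 0 := by
    rw [show (64 : K) = 2 ^ 6 by norm_num]
    exact pow_ne_zero 6 h2
  rw [cubic_eq_sub_two_mul] at hxy
  calc ((x ^ 2 - 4 * x + 7) * y / (8 * (x - 2) ^ 2)) ^ 2
      = (x ^ 2 - 4 * x + 7) ^ 2 * (x ^ 2 + 2 * x - 11) / (64 * (x - 2) ^ 3) := by
        rw [div_pow, mul_pow, hxy]
        field_simp
        ring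
    _ = ((x ^ 2 - 2 * x - 3) ^ 3 + 64 * (x - 2) ^ 3) / (64 * (x - 2) ^ 3) := by
        rw [isogeny_numerator_identity]
    _ = ((x ^ 2 - 2 * x - 3) / (4 * (x - 2))) ^ 3 + 1 := by
        field_simp
        ring

/-- The map `ψ(x,y) = ((x² - 2x - 3)/(4(x - 2)), (x² - 4x + 7)y/(8(x - 2)²))` sends affine
points of the elliptic curve `y² = x³ - 15x + 22` (with `x ≠ 2`) to affine points of the
elliptic curve `y² = x³ + 1`. -/
theorem isogeny_formula_maps_curve_to_curve :
    ∀ x y : ℚ, y ^ 2 = x ^ 3 - 15 * x + 22 → x ≠ 2 →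
      ((x ^ 2 - 4 * x + 7) * y / (8 * (x - 2) ^ 2)) ^ 2 =
        ((x ^ 2 - 2 * x - 3) / (4 * (x - 2))) ^ 3 + 1 :=
  fun _ _ => isogeny_formula_maps_curve_to_curve_of_two_ne_zero two_ne_zero
end

section
/- Let E be the elliptic curve y² = x³ + 1 over ℂ, and let ω ∈ ℂ be a primitive cube root of unity (ω² + ω + 1 = 0). Then the points (2,−3) and (2ω,−3) lie on E(ℂ), each satisfies [2]P = (0,−1), and the subgroup of E(ℂ) generated by {(0,1), (2,−3), (2ω,−3)} is isomorphic to ℤ/2ℤ × ℤ/6ℤ. -/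
/-!
`P = (2,-3)` has order 6 on `y² = x³ + 1`: `2P = (0,-1) = -(0,1)` and `3P = (-1,0)` has `y = 0`.
The point `T = (1+ω,0) = (-ω²,0)` is also 2-torsion, and `(2ω,-3) = T + P`, so the three points
generate `⟨T, P⟩`. The only point of order 2 in the cyclic group `⟨P⟩` is `3P ≠ T`, hence
`⟨T⟩ ∩ ⟨P⟩ = 0` and `⟨T, P⟩ ≅ ℤ/2 × ℤ/6`.
-/

open WeierstrassCurve WeierstrassCurve.Affine

/-- The elliptic curve `y² = x³ + 1` over `ℂ`. -/
def W14 : WeierstrassCurve.Affine ℂ := ⟨0, 0, 0, 0, 1⟩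

namespace AddSubgroup

variable {G : Type*} [AddCommGroup G]

theorem disjoint_zmultiples_of_two_nsmul_eq_zero {t p : G} (ht : 2 • t = 0)
    (htp : t ∉ zmultiples p) : Disjoint (zmultiples t) (zmultiples p) := by
  rw [disjoint_def]
  intro x hxt hxp
  obtain ⟨k, rfl⟩ := mem_zmultiples_iff.mp hxt
  have ht' : (2 : ℤ) • t = 0 := by rwa [two_zsmul, ← two_nsmul]
  obtain ⟨j, rfl | rfl⟩ := Int.even_or_odd' k
  · rw [mul_zsmul', ht', zsmul_zero]
  · rw [add_zsmul, mul_zsmul', ht', zsmul_zero, zero_add, one_zsmul] at hxp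
    exact absurd hxp htp

theorem eq_nsmul_of_mem_zmultiples_of_addOrderOf_eq_two_mul {t p : G} {n : ℕ}
    (hp : addOrderOf p = 2 * n) (htp : t ∈ zmultiples p) (ht : 2 • t = 0) (ht₀ : t ≠ 0) :
    t = n • p := by
  obtain ⟨k, rfl⟩ := mem_zmultiples_iff.mp htp
  rw [← natCast_zsmul, zsmul_eq_zsmul_iff_modEq, hp, Int.modEq_iff_dvd]
  rw [← natCast_zsmul, smul_smul, ← addOrderOf_dvd_iff_zsmul_eq_zero, hp] at ht
  rw [Ne, ← addOrderOf_dvd_iff_zsmul_eq_zero, hp] at ht₀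
  obtain ⟨c, hc⟩ := ht
  have hk : k = n * c := by push_cast at hc; linarith
  obtain ⟨d, rfl | rfl⟩ := Int.even_or_odd' c
  · exact absurd ⟨d, by rw [hk]; push_cast; ring⟩ ht₀
  · exact ⟨-d, by rw [hk]; push_cast; ring⟩

theorem closure_neg_two_nsmul_pair_add (a b : G) :
    closure {-(2 • b), b, a + b} = closure {a, b} := by
  have ha : a ∈ closure {a, b} := subset_closure (by simp)
  have hb : b ∈ closure {a, b} := subset_closure (by simp)
  have hb' : b ∈ closure {-(2 • b), b, a + b} := subset_closure (by simp)
  have hab : a + b ∈ closure {-(2 • b), b, a + b} := subset_closure (by simp)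
  apply le_antisymm <;> simp only [closure_le, Set.insert_subset_iff, Set.singleton_subset_iff,
    SetLike.mem_coe]
  · exact ⟨neg_mem (nsmul_mem hb 2), hb, add_mem ha hb⟩
  · exact ⟨by simpa using sub_mem hab hb', hb'⟩

theorem nonempty_closure_pair_addEquiv_zmod_prod {a b : G} {m n : ℕ} (ha : addOrderOf a = m)
    (hb : addOrderOf b = n) (hab : Disjoint (zmultiples a) (zmultiples b)) :
    Nonempty (closure {a, b} ≃+ ZMod m × ZMod n) := by
  let φ : ZMod m × ZMod n →+ G :=
    (ZMod.lift m ⟨zmultiplesHom G a, by simp [← ha, addOrderOf_nsmul_eq_zero]⟩).coprod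
      (ZMod.lift n ⟨zmultiplesHom G b, by simp [← hb, addOrderOf_nsmul_eq_zero]⟩)
  have hφ (i j : ℤ) : φ (i, j) = i • a + j • b := by
    simp [φ, AddMonoidHom.coprod_apply, ZMod.lift_coe]
  have hinj : Function.Injective φ := by
    rw [injective_iff_map_eq_zero]
    rintro ⟨x, y⟩ hxy
    obtain ⟨i, rfl⟩ := ZMod.intCast_surjective x
    obtain ⟨j, rfl⟩ := ZMod.intCast_surjective y
    rw [hφ, add_eq_zero_iff_eq_neg] at hxy
    have hi : i • a = 0 :=
      disjoint_def.mp hab (zsmul_mem_zmultiples a i) (hxy ▸ neg_mem (zsmul_mem_zmultiples b j))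
    have hj : j • b = 0 := by rw [hi, zero_eq_neg] at hxy; exact hxy
    rw [← addOrderOf_dvd_iff_zsmul_eq_zero, ha, ← ZMod.intCast_zmod_eq_zero_iff_dvd] at hi
    rw [← addOrderOf_dvd_iff_zsmul_eq_zero, hb, ← ZMod.intCast_zmod_eq_zero_iff_dvd] at hj
    rw [hi, hj, Prod.mk_zero_zero]
  have hrange : closure {a, b} = φ.range := by
    ext z
    rw [mem_closure_pair, AddMonoidHom.mem_range]
    constructor
    · rintro ⟨i, j, rfl⟩
      exact ⟨(i, j), hφ i j⟩
    · rintro ⟨⟨x, y⟩, rfl⟩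
      obtain ⟨i, rfl⟩ := ZMod.intCast_surjective x
      obtain ⟨j, rfl⟩ := ZMod.intCast_surjective y
      exact ⟨i, j, (hφ i j).symm⟩
  exact ⟨(AddEquiv.addSubgroupCongr hrange).trans (AddMonoidHom.ofInjective hinj).symm⟩

end AddSubgroup

theorem addOrderOf_eq_six {G : Type*} [AddMonoid G] {x : G} (h6 : 6 • x = 0) (h2 : 2 • x ≠ 0)
    (h3 : 3 • x ≠ 0) : addOrderOf x = 6 := by
  refine addOrderOf_eq_of_nsmul_and_div_prime_nsmul (by norm_num) h6 fun p hp hdvd ↦ ?_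
  have : p ≤ 6 := Nat.le_of_dvd (by norm_num) hdvd
  interval_cases p <;> simp_all +decide

namespace WeierstrassCurve.Affine.Point

variable {F : Type*} [Field F] [DecidableEq F] {W : Affine F}

theorem some_add_some_of_slope {x₁ x₂ x₃ y₁ y₂ y₃ ℓ : F} {h₁ : W.Nonsingular x₁ y₁}
    {h₂ : W.Nonsingular x₂ y₂} {h₃ : W.Nonsingular x₃ y₃} (hx : x₁ ≠ x₂)
    (hℓ : y₁ - y₂ = ℓ * (x₁ - x₂)) (hx₃ : x₃ = W.addX x₁ x₂ ℓ) (hy₃ : y₃ = W.addY x₁ x₂ y₁ ℓ) :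
    some _ _ h₁ + some _ _ h₂ = some _ _ h₃ := by
  have hs : W.slope x₁ x₂ y₁ y₂ = ℓ := by
    rw [slope_of_X_ne hx, div_eq_iff (sub_ne_zero.mpr hx), hℓ]
  simp only [add_of_X_ne hx, hs, hx₃, hy₃]

theorem two_nsmul_some_of_slope {x₁ x₃ y₁ y₃ ℓ : F} {h₁ : W.Nonsingular x₁ y₁}
    {h₃ : W.Nonsingular x₃ y₃} (hy : y₁ ≠ W.negY x₁ y₁)
    (hℓ : 3 * x₁ ^ 2 + 2 * W.a₂ * x₁ + W.a₄ - W.a₁ * y₁ = ℓ * (y₁ - W.negY x₁ y₁))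
    (hx₃ : x₃ = W.addX x₁ x₁ ℓ) (hy₃ : y₃ = W.addY x₁ x₁ y₁ ℓ) :
    2 • some _ _ h₁ = some _ _ h₃ := by
  have hs : W.slope x₁ x₁ y₁ y₁ = ℓ := by
    rw [slope_of_Y_ne rfl hy, div_eq_iff (sub_ne_zero.mpr hy), hℓ]
  simp only [two_nsmul, add_self_of_Y_ne hy, hs, hx₃, hy₃]

theorem two_nsmul_some_of_Y_eq {x₁ y₁ : F} {h₁ : W.Nonsingular x₁ y₁} (hy : y₁ = W.negY x₁ y₁) :
    2 • some _ _ h₁ = 0 := by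
  rw [two_nsmul, add_self_of_Y_eq hy]

end WeierstrassCurve.Affine.Point

open Point

theorem W14_Δ_ne_zero : W14.Δ ≠ 0 := by
  simp only [W14, Δ, b₂, b₄, b₆, b₈]; norm_num

theorem W14_nonsingular {x y : ℂ} (h : y ^ 2 = x ^ 3 + 1) : W14.Nonsingular x y := by
  rw [← equation_iff_nonsingular_of_Δ_ne_zero W14_Δ_ne_zero, equation_iff]
  simp only [W14]
  linear_combination h

theorem W14_negY (x y : ℂ) : W14.negY x y = -y := by simp [negY, W14]

theorem W14_addX (x₁ x₂ ℓ : ℂ) : W14.addX x₁ x₂ ℓ = ℓ ^ 2 - x₁ - x₂ := by simp [addX, W14]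

theorem W14_addY (x₁ x₂ y₁ ℓ : ℂ) :
    W14.addY x₁ x₂ y₁ ℓ = -(ℓ * (ℓ ^ 2 - x₁ - x₂ - x₁) + y₁) := by
  simp only [addY, negAddY, negY, addX, W14]
  ring

theorem W14_two_nsmul_some_of_Y_eq_zero {x : ℂ} {h : W14.Nonsingular x 0} :
    2 • some _ _ h = 0 :=
  two_nsmul_some_of_Y_eq (by rw [W14_negY, _root_.neg_zero])

theorem W14_two_nsmul_some_two {h : W14.Nonsingular 2 (-3)} {h' : W14.Nonsingular 0 (-1)} :
    2 • some _ _ h = some _ _ h' := by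
  refine two_nsmul_some_of_slope (ℓ := -2) ?_ ?_ ?_ ?_ <;>
    simp only [W14_negY, W14_addX, W14_addY] <;> norm_num [W14]

theorem W14_three_nsmul_some_two {h : W14.Nonsingular 2 (-3)} {h' : W14.Nonsingular (-1) 0} :
    3 • some _ _ h = some _ _ h' := by
  rw [succ_nsmul, W14_two_nsmul_some_two (h' := W14_nonsingular (by norm_num))]
  refine some_add_some_of_slope (ℓ := -1) (by norm_num) (by norm_num) ?_ ?_
  · rw [W14_addX]; norm_num
  · rw [W14_addY]; norm_num

theorem W14_addOrderOf_some_two {h : W14.Nonsingular 2 (-3)} : addOrderOf (some _ _ h) = 6 := by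
  have h3 : 3 • some _ _ h = some (-1) 0 (W14_nonsingular (by norm_num)) := W14_three_nsmul_some_two
  refine addOrderOf_eq_six ?_ ?_ (h3 ▸ some_ne_zero _)
  · rw [show 6 = 3 * 2 from rfl, mul_nsmul, h3, W14_two_nsmul_some_of_Y_eq_zero]
  · rw [W14_two_nsmul_some_two (h' := W14_nonsingular (by norm_num))]
    exact some_ne_zero _

section

variable {ω : ℂ} (hω : ω ^ 2 + ω + 1 = 0)

include hω in
theorem W14_two_nsmul_some_two_mul_omega {h : W14.Nonsingular (2 * ω) (-3)}
    {h' : W14.Nonsingular 0 (-1)} : 2 • some _ _ h = some _ _ h' := by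
  refine two_nsmul_some_of_slope (ℓ := 2 + 2 * ω) ?_ ?_ ?_ ?_ <;>
    simp only [W14_negY, W14_addX, W14_addY]
  · norm_num
  · norm_num [W14]
    linear_combination 12 * hω
  · linear_combination -4 * hω
  · linear_combination (8 * ω + 4) * hω

include hω in
theorem W14_some_one_add_omega_add_some_two {h : W14.Nonsingular (1 + ω) 0}
    {h₂ : W14.Nonsingular 2 (-3)} {h' : W14.Nonsingular (2 * ω) (-3)} :
    some _ _ h + some _ _ h₂ = some _ _ h' := by
  have hx : 1 + ω ≠ 2 := fun hx ↦ by
    have : (3 : ℂ) = 0 := by linear_combination hω - (ω + 2) * hx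
    norm_num at this
  refine some_add_some_of_slope (ℓ := -2 - ω) hx ?_ ?_ ?_
  · linear_combination hω
  · rw [W14_addX]; linear_combination -hω
  · rw [W14_addY]; linear_combination (-ω - 3) * hω

include hω in
theorem W14_some_one_add_omega_notMem_zmultiples_some_two {h : W14.Nonsingular (1 + ω) 0}
    {h₂ : W14.Nonsingular 2 (-3)} : some _ _ h ∉ AddSubgroup.zmultiples (some _ _ h₂) := by
  intro hmem
  have h3 := AddSubgroup.eq_nsmul_of_mem_zmultiples_of_addOrderOf_eq_two_mul (n := 3)
    W14_addOrderOf_some_two hmem W14_two_nsmul_some_of_Y_eq_zero (some_ne_zero _)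
  rw [W14_three_nsmul_some_two (h' := W14_nonsingular (by norm_num)), some.injEq] at h3
  have : (3 : ℂ) = 0 := by linear_combination hω - (ω - 1) * h3.1
  norm_num at this

end

/-- On `y² = x³ + 1` over `ℂ`, with `ω` a primitive cube root of unity (`ω² + ω + 1 = 0`):
the points `(2,-3)` and `(2ω,-3)` lie on the curve, each satisfies `[2]P = (0,-1)`, and the
subgroup generated by `{(0,1), (2,-3), (2ω,-3)}` is isomorphic to `ℤ/2ℤ × ℤ/6ℤ`. -/
theorem quasi_critical_points_of_6T5_complex (ω : ℂ) (hω : ω ^ 2 + ω + 1 = 0) :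
    W14.Δ ≠ 0 ∧
    ∃ (h1 : W14.Nonsingular 0 1) (h2 : W14.Nonsingular 2 (-3))
      (h3 : W14.Nonsingular (2 * ω) (-3)) (h4 : W14.Nonsingular 0 (-1)),
      2 • Point.some _ _ h2 = Point.some _ _ h4 ∧
      2 • Point.some _ _ h3 = Point.some _ _ h4 ∧
      Nonempty ((AddSubgroup.closure {Point.some _ _ h1, Point.some _ _ h2, Point.some _ _ h3} :
        AddSubgroup W14.Point) ≃+ ZMod 2 × ZMod 6) := by
  have hP₁ : W14.Nonsingular 0 1 := W14_nonsingular (by norm_num)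
  have hP : W14.Nonsingular 2 (-3) := W14_nonsingular (by norm_num)
  have hP₃ : W14.Nonsingular (2 * ω) (-3) :=
    W14_nonsingular (by linear_combination (8 - 8 * ω) * hω)
  have hQ : W14.Nonsingular 0 (-1) := W14_nonsingular (by norm_num)
  have hT : W14.Nonsingular (1 + ω) 0 := W14_nonsingular (by linear_combination (-ω - 2) * hω)
  refine ⟨W14_Δ_ne_zero, hP₁, hP, hP₃, hQ, W14_two_nsmul_some_two,
    W14_two_nsmul_some_two_mul_omega hω, ?_⟩
  set P := some _ _ hP
  set T := some _ _ hT
  have hP₁_eq : some _ _ hP₁ = -(2 • P) := by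
    rw [W14_two_nsmul_some_two (h' := hQ), neg_some, some.injEq, W14_negY]; norm_num
  have hP₃_eq : some _ _ hP₃ = T + P := (W14_some_one_add_omega_add_some_two hω).symm
  have hT₂ : 2 • T = 0 := W14_two_nsmul_some_of_Y_eq_zero
  rw [hP₁_eq, hP₃_eq, AddSubgroup.closure_neg_two_nsmul_pair_add]
  exact AddSubgroup.nonempty_closure_pair_addEquiv_zmod_prod
    (addOrderOf_eq_prime hT₂ (some_ne_zero _)) W14_addOrderOf_some_two
    (AddSubgroup.disjoint_zmultiples_of_two_nsmul_eq_zero hT₂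
      (W14_some_one_add_omega_notMem_zmultiples_some_two hω))
end
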